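/- For every δ ∈ R: tr(Q₋^δ∧Q₊^δ + Q₊^δ∧Q₋^δ) = 0, tr(Q₋^δ∧Q₀ + Q₀∧Q₋^δ) = 0, and tr(Q₊^δ∧Q₀ + Q₀∧Q₊^δ) = 16(1+δ)·ω∧ω. -/

import Mathlib

/-! The entries of `Q₋^δ`, `Q₊^δ` and `2 Q₀` are polynomials in the seven degree-1 elements
`e₀, e₁, e₂, e₃, f₁, f₂, f₃`, so each trace is a sum of products of four of them. Indexing
these generators by `Fin 7` and sorting every product into increasing index order with
`x ∧ x = 0` and `y ∧ x = -(x ∧ y)` brings both sides of each identity to a normal form, where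
they agree coefficientwise; the factor `1/2` of `Q₀` is pulled out first. -/

open Matrix

noncomputable section

variable {R : Type*} [CommRing R] {M : Type*} [AddCommGroup M] [Module R M]

/-- `x` is a degree-1 element of the exterior algebra `Λ(M)`, i.e. it lies in the image of
the canonical inclusion `ι : M → Λ(M)`. -/
def IsDeg1 (x : ExteriorAlgebra R M) : Prop :=
  ∃ m : M, ExteriorAlgebra.ι R m = x

/-- `x` is a degree-2 element of the exterior algebra `Λ(M)`, i.e. an `R`-linear combination
of products of two degree-1 elements. -/
def IsDeg2 (x : ExteriorAlgebra R M) : Prop :=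
  x ∈ (LinearMap.range (ExteriorAlgebra.ι R (M := M)) ^ 2 :
    Submodule R (ExteriorAlgebra R M))

/-- For a 3×1 vector `a`, `box a = [a]` is the 3×3 matrix with rows
`(0, a₃, −a₂)`, `(−a₃, 0, a₁)`, `(a₂, −a₁, 0)`. -/
def box (a : Matrix (Fin 3) (Fin 1) (ExteriorAlgebra R M)) :
    Matrix (Fin 3) (Fin 3) (ExteriorAlgebra R M) :=
  !![0, a 2 0, -(a 1 0); -(a 2 0), 0, a 0 0; a 1 0, -(a 0 0), 0]

/-- The cross product `a × b` of 3×1 vectors over the exterior algebra. -/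
def cross (a b : Matrix (Fin 3) (Fin 1) (ExteriorAlgebra R M)) :
    Matrix (Fin 3) (Fin 1) (ExteriorAlgebra R M) :=
  !![a 1 0 * b 2 0 - a 2 0 * b 1 0;
     a 2 0 * b 0 0 - a 0 0 * b 2 0;
     a 0 0 * b 1 0 - a 1 0 * b 0 0]

/-- `ω = e₁∧f₁ + e₂∧f₂ + e₃∧f₃`. -/
def om (e f : Matrix (Fin 3) (Fin 1) (ExteriorAlgebra R M)) : ExteriorAlgebra R M :=
  e 0 0 * f 0 0 + e 1 0 * f 1 0 + e 2 0 * f 2 0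

/-- `ImΩ = f₁∧e₂∧e₃ + f₂∧e₃∧e₁ + f₃∧e₁∧e₂ − f₁∧f₂∧f₃`. -/
def imOm (e f : Matrix (Fin 3) (Fin 1) (ExteriorAlgebra R M)) : ExteriorAlgebra R M :=
  f 0 0 * e 1 0 * e 2 0 + f 1 0 * e 2 0 * e 0 0 + f 2 0 * e 0 0 * e 1 0
    - f 0 0 * f 1 0 * f 2 0

/-- A 7×7 matrix assembled from blocks of sizes 1, 3, 3. -/
def blk {α : Type*} (P : Matrix (Fin 1) (Fin 1) α) (Q S : Matrix (Fin 1) (Fin 3) α)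
    (T : Matrix (Fin 3) (Fin 1) α) (U V : Matrix (Fin 3) (Fin 3) α)
    (W : Matrix (Fin 3) (Fin 1) α) (X Y : Matrix (Fin 3) (Fin 3) α) :
    Matrix (Fin 1 ⊕ (Fin 3 ⊕ Fin 3)) (Fin 1 ⊕ (Fin 3 ⊕ Fin 3)) α :=
  Matrix.fromBlocks P (Matrix.fromCols Q S) (Matrix.fromRows T W)
    (Matrix.fromBlocks U V X Y)

/-- The 3×3 scalar diagonal matrix `x·I₃`. -/
def dg {α : Type*} [Zero α] (x : α) : Matrix (Fin 3) (Fin 3) α :=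
  Matrix.diagonal fun _ => x

/-- The 7×7 block matrix `𝓘 = [[0,0,0],[0,0,−I],[0,I,0]]`. -/
def calI (α : Type*) [Ring α] :
    Matrix (Fin 1 ⊕ (Fin 3 ⊕ Fin 3)) (Fin 1 ⊕ (Fin 3 ⊕ Fin 3)) α :=
  blk 0 0 0 0 0 (-1) 0 1 0

/-- `B = [[0, fᵀ, −eᵀ], [−f, 0, −e₀I], [e, e₀I, 0]]`. -/
def Bmat (e f : Matrix (Fin 3) (Fin 1) (ExteriorAlgebra R M)) (e0 : ExteriorAlgebra R M) :
    Matrix (Fin 1 ⊕ (Fin 3 ⊕ Fin 3)) (Fin 1 ⊕ (Fin 3 ⊕ Fin 3)) (ExteriorAlgebra R M) :=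
  blk 0 (fᵀ) (-(eᵀ)) (-f) 0 (-(dg e0)) e (dg e0) 0

/-- `C = [[0, fᵀ, −eᵀ], [−f, −[e], e₀I+[f]], [e, −e₀I+[f], [e]]]`. -/
def Cmat (e f : Matrix (Fin 3) (Fin 1) (ExteriorAlgebra R M)) (e0 : ExteriorAlgebra R M) :
    Matrix (Fin 1 ⊕ (Fin 3 ⊕ Fin 3)) (Fin 1 ⊕ (Fin 3 ⊕ Fin 3)) (ExteriorAlgebra R M) :=
  blk 0 (fᵀ) (-(eᵀ)) (-f) (-(box e)) (dg e0 + box f) e (-(dg e0) + box f) (box e)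

/-- `F_A = [[0,0,0],[0,α,β],[0,−β,α]]`. -/
def FA (a b : Matrix (Fin 3) (Fin 3) (ExteriorAlgebra R M)) :
    Matrix (Fin 1 ⊕ (Fin 3 ⊕ Fin 3)) (Fin 1 ⊕ (Fin 3 ⊕ Fin 3)) (ExteriorAlgebra R M) :=
  blk 0 0 0 0 a b 0 (-b) a

/-- `Q₋^δ = e₀ ∧ [[0, (1+δ)eᵀ, (1+δ)fᵀ], [−(1+δ)e, −2δ[f], −2δ[e]], [−(1+δ)f, −2δ[e], 2δ[f]]]`. -/
def Qminus (e f : Matrix (Fin 3) (Fin 1) (ExteriorAlgebra R M)) (e0 : ExteriorAlgebra R M)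
    (δ : R) :
    Matrix (Fin 1 ⊕ (Fin 3 ⊕ Fin 3)) (Fin 1 ⊕ (Fin 3 ⊕ Fin 3)) (ExteriorAlgebra R M) :=
  (blk 0 ((1 + δ) • (eᵀ)) ((1 + δ) • (fᵀ))
      (-((1 + δ) • e)) (-((2 * δ) • box f)) (-((2 * δ) • box e))
      (-((1 + δ) • f)) (-((2 * δ) • box e)) ((2 * δ) • box f)).map fun x => e0 * x

/-- `Q₊^δ`. -/
def Qplus (e f : Matrix (Fin 3) (Fin 1) (ExteriorAlgebra R M)) (δ : R) :
    Matrix (Fin 1 ⊕ (Fin 3 ⊕ Fin 3)) (Fin 1 ⊕ (Fin 3 ⊕ Fin 3)) (ExteriorAlgebra R M) :=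
  blk 0 ((2 * δ) • ((cross e f)ᵀ)) (δ • ((cross e e - cross f f)ᵀ))
    (-((2 * δ) • cross e f)) (-((1 + δ) • (f * (fᵀ)))) ((1 + δ) • (f * (eᵀ)))
    (-(δ • (cross e e - cross f f))) ((1 + δ) • (e * (fᵀ))) (-((1 + δ) • (e * (eᵀ))))

/-- `Q₀`. -/
def Qzero [Algebra ℚ R] (e f : Matrix (Fin 3) (Fin 1) (ExteriorAlgebra R M)) :
    Matrix (Fin 1 ⊕ (Fin 3 ⊕ Fin 3)) (Fin 1 ⊕ (Fin 3 ⊕ Fin 3)) (ExteriorAlgebra R M) :=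
  (algebraMap ℚ R (1/2)) •
    blk 0 0 0
      0 (-(box (cross e e + cross f f))) (-((2 : R) • (box e * box f - box f * box e)))
      0 ((2 : R) • (box e * box f - box f * box e)) (-(box (cross e e + cross f f)))

theorem Matrix.trace_fromBlocks {l m α : Type*} [Fintype l] [Fintype m] [AddCommMonoid α]
    (A : Matrix l l α) (B : Matrix l m α) (C : Matrix m l α) (D : Matrix m m α) :
    trace (fromBlocks A B C D) = trace A + trace D := by
  simp [trace, Fintype.sum_sum_type]

theorem trace_blk_mul_blk {α : Type*} [Semiring α]
    (P P' : Matrix (Fin 1) (Fin 1) α) (Q Q' S S' : Matrix (Fin 1) (Fin 3) α)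
    (T T' : Matrix (Fin 3) (Fin 1) α) (U U' V V' : Matrix (Fin 3) (Fin 3) α)
    (W W' : Matrix (Fin 3) (Fin 1) α) (X X' Y Y' : Matrix (Fin 3) (Fin 3) α) :
    trace (blk P Q S T U V W X Y * blk P' Q' S' T' U' V' W' X' Y') =
      trace (P * P' + Q * T' + S * W') + trace (T * Q' + U * U' + V * X') +
        trace (W * S' + X * V' + Y * Y') := by
  simp only [blk, fromBlocks_multiply, fromCols_mul_fromRows, fromRows_mul_fromCols,
    fromBlocks_add, trace_fromBlocks, trace_add]
  abel

theorem blk_map {α β : Type*} (P : Matrix (Fin 1) (Fin 1) α) (Q S : Matrix (Fin 1) (Fin 3) α)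
    (T : Matrix (Fin 3) (Fin 1) α) (U V : Matrix (Fin 3) (Fin 3) α)
    (W : Matrix (Fin 3) (Fin 1) α) (X Y : Matrix (Fin 3) (Fin 3) α) (φ : α → β) :
    (blk P Q S T U V W X Y).map φ =
      blk (P.map φ) (Q.map φ) (S.map φ) (T.map φ) (U.map φ) (V.map φ) (W.map φ) (X.map φ)
        (Y.map φ) := by
  simp only [blk, fromBlocks_map, fromRows_map, fromCols_map]

theorem IsDeg1.mul_self_eq_zero {x : ExteriorAlgebra R M} (hx : IsDeg1 x) : x * x = 0 := by
  obtain ⟨m, rfl⟩ := hx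
  exact ExteriorAlgebra.ι_sq_zero m

theorem IsDeg1.mul_comm_neg {x y : ExteriorAlgebra R M} (hx : IsDeg1 x) (hy : IsDeg1 y) :
    y * x = -(x * y) := by
  obtain ⟨m, rfl⟩ := hx
  obtain ⟨n, rfl⟩ := hy
  exact eq_neg_of_add_eq_zero_left (ExteriorAlgebra.ι_add_mul_swap n m)

theorem IsDeg1.mul_left_comm_neg {x y : ExteriorAlgebra R M} (hx : IsDeg1 x) (hy : IsDeg1 y)
    (u : ExteriorAlgebra R M) : y * (x * u) = -(x * (y * u)) := by
  rw [← mul_assoc, hx.mul_comm_neg hy, neg_mul, mul_assoc]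

def twoQzero (e f : Matrix (Fin 3) (Fin 1) (ExteriorAlgebra R M)) :
    Matrix (Fin 1 ⊕ (Fin 3 ⊕ Fin 3)) (Fin 1 ⊕ (Fin 3 ⊕ Fin 3)) (ExteriorAlgebra R M) :=
  blk 0 0 0
    0 (-(box (cross e e + cross f f))) (-((2 : R) • (box e * box f - box f * box e)))
    0 ((2 : R) • (box e * box f - box f * box e)) (-(box (cross e e + cross f f)))

theorem Qzero_eq_smul_twoQzero [Algebra ℚ R]
    (e f : Matrix (Fin 3) (Fin 1) (ExteriorAlgebra R M)) :
    Qzero e f = algebraMap ℚ R (1 / 2) • twoQzero e f :=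
  rfl

theorem trace_anticomm_Qminus_Qplus {g : Fin 7 → ExteriorAlgebra R M} (hg : ∀ i, IsDeg1 (g i))
    {e f : Matrix (Fin 3) (Fin 1) (ExteriorAlgebra R M)} {e0 : ExteriorAlgebra R M}
    (he : e = !![g 1; g 2; g 3]) (hf : f = !![g 4; g 5; g 6]) (he0 : e0 = g 0) (δ : R) :
    trace (Qminus e f e0 δ * Qplus e f δ + Qplus e f δ * Qminus e f e0 δ) = 0 := by
  subst he hf he0
  simp only [Qminus, Qplus, blk_map, map_apply, trace_add, trace_blk_mul_blk, trace_fin_one,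
    trace_fin_three, mul_apply, Fin.sum_univ_one, Fin.sum_univ_three, Matrix.smul_apply,
    Matrix.neg_apply, Matrix.sub_apply, Matrix.zero_apply, transpose_apply, box, cross, of_apply,
    cons_val', cons_val_zero, cons_val_one, cons_val_two, head_cons, tail_cons, cons_val_fin_one,
    empty_val', head_fin_const]
  -- The side conditions `i < j` make the swaps terminate: they sort each product of generators.
  simp (disch := decide) only [fun i j (_ : i < j) => (hg i).mul_comm_neg (hg j),
    fun i j (_ : i < j) => (hg i).mul_left_comm_neg (hg j), fun i => (hg i).mul_self_eq_zero,
    mul_add, add_mul, mul_sub, sub_mul, neg_mul, mul_neg, neg_neg, smul_mul_assoc, mul_smul_comm,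
    mul_assoc, mul_zero, zero_mul, smul_zero, neg_zero, add_zero, zero_add, smul_neg,
    smul_sub, smul_smul]
  module

theorem trace_anticomm_Qminus_twoQzero {g : Fin 7 → ExteriorAlgebra R M}
    (hg : ∀ i, IsDeg1 (g i)) {e f : Matrix (Fin 3) (Fin 1) (ExteriorAlgebra R M)}
    {e0 : ExteriorAlgebra R M} (he : e = !![g 1; g 2; g 3]) (hf : f = !![g 4; g 5; g 6])
    (he0 : e0 = g 0) (δ : R) :
    trace (Qminus e f e0 δ * twoQzero e f + twoQzero e f * Qminus e f e0 δ) = 0 := by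
  subst he hf he0
  simp only [Qminus, twoQzero, blk_map, map_apply, trace_add, trace_blk_mul_blk, trace_fin_one,
    trace_fin_three, mul_apply, Fin.sum_univ_one, Fin.sum_univ_three, Matrix.add_apply,
    Matrix.smul_apply, Matrix.neg_apply, Matrix.sub_apply, Matrix.zero_apply, transpose_apply,
    box, cross, of_apply, cons_val', cons_val_zero, cons_val_one, cons_val_two, head_cons,
    tail_cons, cons_val_fin_one, empty_val', head_fin_const]
  simp (disch := decide) only [fun i j (_ : i < j) => (hg i).mul_comm_neg (hg j),
    fun i j (_ : i < j) => (hg i).mul_left_comm_neg (hg j),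
    mul_add, add_mul, mul_sub, sub_mul, neg_mul, mul_neg, neg_neg, smul_mul_assoc, mul_smul_comm,
    mul_assoc, mul_zero, zero_mul, smul_zero, neg_zero, add_zero, zero_add, smul_neg, smul_add,
    smul_sub, smul_smul]
  module

theorem trace_anticomm_Qplus_twoQzero {g : Fin 7 → ExteriorAlgebra R M}
    (hg : ∀ i, IsDeg1 (g i)) {e f : Matrix (Fin 3) (Fin 1) (ExteriorAlgebra R M)}
    (he : e = !![g 1; g 2; g 3]) (hf : f = !![g 4; g 5; g 6]) (δ : R) :
    trace (Qplus e f δ * twoQzero e f + twoQzero e f * Qplus e f δ) =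
      (32 * (1 + δ)) • (om e f * om e f) := by
  subst he hf
  simp only [Qplus, twoQzero, om, trace_add, trace_blk_mul_blk, trace_fin_one, trace_fin_three,
    mul_apply, Fin.sum_univ_one, Fin.sum_univ_three, Matrix.add_apply, Matrix.smul_apply,
    Matrix.neg_apply, Matrix.sub_apply, Matrix.zero_apply, transpose_apply, box, cross, of_apply,
    cons_val', cons_val_zero, cons_val_one, cons_val_two, head_cons, tail_cons, cons_val_fin_one,
    empty_val', head_fin_const]
  simp (disch := decide) only [fun i j (_ : i < j) => (hg i).mul_comm_neg (hg j),
    fun i j (_ : i < j) => (hg i).mul_left_comm_neg (hg j), fun i => (hg i).mul_self_eq_zero,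
    mul_add, add_mul, mul_sub, sub_mul, neg_mul, mul_neg, neg_neg, smul_mul_assoc, mul_smul_comm,
    mul_assoc, mul_zero, zero_mul, smul_zero, neg_zero, add_zero, zero_add, smul_neg, smul_add,
    smul_sub, smul_smul]
  module

theorem stmt17 [Algebra ℚ R] (e f : Matrix (Fin 3) (Fin 1) (ExteriorAlgebra R M))
    (e0 : ExteriorAlgebra R M)
    (he : ∀ i, IsDeg1 (e i 0)) (hf : ∀ i, IsDeg1 (f i 0)) (he0 : IsDeg1 e0) :
    ∀ δ : R,
      Matrix.trace (Qminus e f e0 δ * Qplus e f δ + Qplus e f δ * Qminus e f e0 δ) = 0 ∧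
      Matrix.trace (Qminus e f e0 δ * Qzero e f + Qzero e f * Qminus e f e0 δ) = 0 ∧
      Matrix.trace (Qplus e f δ * Qzero e f + Qzero e f * Qplus e f δ)
        = (16 * (1 + δ)) • (om e f * om e f) := by
  intro δ
  set g : Fin 7 → ExteriorAlgebra R M := ![e0, e 0 0, e 1 0, e 2 0, f 0 0, f 1 0, f 2 0]
  have hg : ∀ i, IsDeg1 (g i) := by
    intro i
    fin_cases i
    exacts [he0, he 0, he 1, he 2, hf 0, hf 1, hf 2]
  have he' : e = !![g 1; g 2; g 3] := by
    ext i j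
    fin_cases i <;> fin_cases j <;> rfl
  have hf' : f = !![g 4; g 5; g 6] := by
    ext i j
    fin_cases i <;> fin_cases j <;> rfl
  have he0' : e0 = g 0 := rfl
  have half_mul : algebraMap ℚ R (1 / 2) * (32 * (1 + δ)) = 16 * (1 + δ) := by
    rw [← mul_assoc, ← map_ofNat (algebraMap ℚ R) 32, ← map_mul,
      show (1 / 2 : ℚ) * 32 = 16 by norm_num, map_ofNat]
  simp only [Qzero_eq_smul_twoQzero, Matrix.mul_smul, Matrix.smul_mul, ← smul_add, trace_smul]
  refine ⟨trace_anticomm_Qminus_Qplus hg he' hf' he0' δ, ?_, ?_⟩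
  · rw [trace_anticomm_Qminus_twoQzero hg he' hf' he0', smul_zero]
  · rw [trace_anticomm_Qplus_twoQzero hg he' hf', smul_smul, half_mul]

end
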